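/- arXiv:2602.23111 — 2 statements merged into one kernel-verified Lean document; each statement's English description precedes it below -/
import Mathlib

section
/- (Variance bound of RAC) Let X ∈ ℝ^{m×n} and Q₂ ∈ ℝ^{n×r₂} be uniformly sampled from the Stiefel manifold via QR of a Gaussian matrix, and let X̃ = (n/r₂)·XQ₂Q₂ᵀ. Then E[‖X̃ − X‖_F²] ≤ (n/r₂ − 1)·‖X‖_F². -/
/-!
`Q₂ Q₂ᵀ` is the orthogonal projection `P` onto the column span of the Gaussian matrix `S`, so it
is the function `colProj S = S (Sᵀ S)⁻¹ Sᵀ` of `S` alone, equivariant under orthogonal changes of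
the rows. The law of `S` is invariant under flipping the sign of a row and under permuting rows;
hence `E[P]` has vanishing off-diagonal entries and a constant diagonal, and `tr P = r₂` forces
`E[P] = (r₂/n) • 1`. For a symmetric idempotent `P`,
`‖c X P - X‖² = (c² - 2c) tr(Xᵀ X P) + ‖X‖²`, so with `c = n/r₂` the expectation is exactly
`(n/r₂ - 1) ‖X‖²`.
-/

open Matrix MeasureTheory ProbabilityTheory

instance matrixMeasurableSpace {a b : Type*} : MeasurableSpace (Matrix a b ℝ) :=
  inferInstanceAs (MeasurableSpace (a → b → ℝ))

/-- Squared Frobenius norm of a matrix. -/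
def frobSq {a b : Type*} [Fintype a] [Fintype b] (M : Matrix a b ℝ) : ℝ :=
  ∑ i, ∑ j, (M i j) ^ 2

section Projection
variable {m r α : Type*} [Fintype m] [Fintype r] [DecidableEq r] [CommRing α]

-- Where `Mᵀ M` is singular the inverse is the junk value `0`, and then `colProj M = 0`.
noncomputable def colProj (M : Matrix m r α) : Matrix m m α := M * (Mᵀ * M)⁻¹ * Mᵀ

lemma colProj_eq_mul_transpose {Q : Matrix m r α} (hQ : Qᵀ * Q = 1) : colProj Q = Q * Qᵀ := by
  simp [colProj, hQ]

lemma colProj_mul_of_isUnit_det (M : Matrix m r α) {R : Matrix r r α} (hR : IsUnit R.det) :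
    colProj (M * R) = colProj M := by
  have hRT : IsUnit Rᵀ.det := by rwa [det_transpose]
  have hgram : (M * R)ᵀ * (M * R) = Rᵀ * (Mᵀ * M) * R := by
    simp only [transpose_mul, Matrix.mul_assoc]
  calc colProj (M * R) = M * (R * R⁻¹) * (Mᵀ * M)⁻¹ * (Rᵀ⁻¹ * Rᵀ) * Mᵀ := by
        rw [colProj, hgram, Matrix.mul_inv_rev, Matrix.mul_inv_rev, transpose_mul]
        simp only [Matrix.mul_assoc]
    _ = colProj M := by
        rw [mul_nonsing_inv _ hR, nonsing_inv_mul _ hRT, Matrix.mul_one, Matrix.mul_one, colProj]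

lemma colProj_orthogonal_mul [DecidableEq m] {U : Matrix m m α} (hU : Uᵀ * U = 1)
    (M : Matrix m r α) : colProj (U * M) = U * colProj M * Uᵀ := by
  simp only [colProj, transpose_mul, Matrix.mul_assoc, ← Matrix.mul_assoc Uᵀ U, hU, Matrix.one_mul]

lemma colProj_submatrix {m' : Type*} [Fintype m'] (e : m' ≃ m) (M : Matrix m r α) :
    colProj (M.submatrix e id) = (colProj M).submatrix e e := by
  have hgram : (M.submatrix e id)ᵀ * M.submatrix e id = Mᵀ * M := by
    rw [transpose_submatrix, ← submatrix_id_id (Mᵀ * M)]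
    exact submatrix_mul_equiv _ _ _ e _
  rw [colProj, colProj, hgram, transpose_submatrix]
  ext i j
  simp [mul_apply]

lemma transpose_colProj (M : Matrix m r α) : (colProj M)ᵀ = colProj M := by
  rw [colProj, transpose_mul, transpose_mul, transpose_transpose, transpose_nonsing_inv,
    transpose_mul, transpose_transpose, Matrix.mul_assoc]

lemma colProj_mul_self (M : Matrix m r α) : colProj M * colProj M = colProj M := by
  by_cases h : IsUnit (Mᵀ * M).det
  · calc colProj M * colProj M = M * ((Mᵀ * M)⁻¹ * (Mᵀ * M)) * (Mᵀ * M)⁻¹ * Mᵀ := by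
          simp only [colProj, Matrix.mul_assoc]
      _ = colProj M := by rw [nonsing_inv_mul _ h, Matrix.mul_one, colProj]
  · simp [colProj, nonsing_inv_apply_not_isUnit _ h]

end Projection

lemma det_pos_of_upperTriangular {r 𝕜 : Type*} [Fintype r] [LinearOrder r] [CommRing 𝕜]
    [PartialOrder 𝕜] [IsStrictOrderedRing 𝕜] {R : Matrix r r 𝕜}
    (htri : ∀ i j, j < i → R i j = 0) (hdiag : ∀ i, 0 < R i i) : 0 < R.det := by
  rw [det_of_isUpperTriangular htri]
  exact Finset.prod_pos fun i _ => hdiag i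

lemma abs_apply_le_one_of_isIdempotentElem {m 𝕜 : Type*} [Fintype m] [CommRing 𝕜] [LinearOrder 𝕜]
    [IsStrictOrderedRing 𝕜] {P : Matrix m m 𝕜}
    (hP : IsIdempotentElem P) (hsymm : Pᵀ = P) (i j : m) : |P i j| ≤ 1 := by
  have hdiag : ∀ a, P a a = ∑ k, P a k ^ 2 := fun a => by
    conv_lhs => rw [← hP.eq]
    simp only [mul_apply, sq]
    exact Finset.sum_congr rfl fun k _ => by rw [← transpose_apply P k a, hsymm]
  have hle : ∀ a b, P a b ^ 2 ≤ P a a := fun a b => by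
    rw [hdiag a]
    exact Finset.single_le_sum (f := fun k => P a k ^ 2) (fun k _ => sq_nonneg _)
      (Finset.mem_univ b)
  have hii : P i i ≤ 1 := by nlinarith [hle i i, sq_nonneg (P i i)]
  exact abs_le_one_iff_mul_self_le_one.2 (by nlinarith [hle i j])

lemma abs_colProj_apply_le_one {m r : Type*} [Fintype m] [Fintype r] [DecidableEq r]
    (M : Matrix m r ℝ) (i j : m) : |colProj M i j| ≤ 1 :=
  abs_apply_le_one_of_isIdempotentElem (colProj_mul_self M) (transpose_colProj M) i j

lemma frobSq_eq_trace {m n : Type*} [Fintype m] [Fintype n] (M : Matrix m n ℝ) :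
    frobSq M = trace (M * Mᵀ) := by
  simp [frobSq, trace, mul_apply, sq]

lemma frobSq_smul_mul_sub_self {m n : Type*} [Fintype m] [Fintype n] (c : ℝ)
    (X : Matrix m n ℝ) {P : Matrix n n ℝ} (hP : IsIdempotentElem P) (hsymm : Pᵀ = P) :
    frobSq (c • (X * P) - X) = (c ^ 2 - 2 * c) * trace (Xᵀ * X * P) + frobSq X := by
  have hXP : trace (X * P * Xᵀ) = trace (Xᵀ * X * P) := by
    rw [trace_mul_comm, Matrix.mul_assoc]
  have hexpand : (c • (X * P) - X) * (c • (X * P) - X)ᵀ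
      = (c ^ 2 - 2 * c) • (X * P * Xᵀ) + X * Xᵀ := by
    rw [transpose_sub, transpose_smul, transpose_mul, hsymm]
    simp only [Matrix.sub_mul, Matrix.mul_sub, Matrix.smul_mul, Matrix.mul_smul,
      ← Matrix.mul_assoc, Matrix.mul_assoc X P P, hP.eq]
    module
  rw [frobSq_eq_trace, frobSq_eq_trace, hexpand, trace_add, trace_smul, hXP, smul_eq_mul]

instance matrixBorelSpace {a b : Type*} [Fintype a] [Fintype b] : BorelSpace (Matrix a b ℝ) :=
  inferInstanceAs (BorelSpace (a → b → ℝ))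

lemma measurable_colProj_apply {m r : Type*} [Fintype m] [Fintype r] [DecidableEq r] (i j : m) :
    Measurable fun M : Matrix m r ℝ => colProj M i j := by
  have hdet : Continuous fun M : Matrix m r ℝ => (Mᵀ * M).det := by fun_prop
  have hadj : Continuous fun M : Matrix m r ℝ => (M * (Mᵀ * M).adjugate * Mᵀ) i j := by fun_prop
  have h : ∀ M : Matrix m r ℝ,
      colProj M i j = (Mᵀ * M).det⁻¹ * (M * (Mᵀ * M).adjugate * Mᵀ) i j := by
    intro M
    rw [colProj, inv_def, Ring.inverse_eq_inv', Matrix.mul_smul, Matrix.smul_mul,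
      Matrix.smul_apply, smul_eq_mul]
  simp only [h]
  exact (measurable_inv.comp hdet.measurable).mul hadj.measurable

section GaussianMatrix
variable {ι κ : Type*} [Fintype ι] [Fintype κ]

noncomputable def gaussianMatrix (ι κ : Type*) [Fintype ι] [Fintype κ] :
    Measure (Matrix ι κ ℝ) :=
  (Measure.pi fun _ : ι × κ => gaussianReal 0 1).map (MeasurableEquiv.curry ι κ ℝ)

lemma measurePreserving_curry_gaussianMatrix :
    MeasurePreserving (MeasurableEquiv.curry ι κ ℝ)
      (Measure.pi fun _ : ι × κ => gaussianReal 0 1) (gaussianMatrix ι κ) :=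
  (MeasurableEquiv.curry ι κ ℝ).measurable.measurePreserving _

lemma measurePreserving_gaussianMatrix_of_pi {f : Matrix ι κ ℝ → Matrix ι κ ℝ}
    {g : (ι × κ → ℝ) → (ι × κ → ℝ)}
    (hg : MeasurePreserving g (Measure.pi fun _ => gaussianReal 0 1)
      (Measure.pi fun _ => gaussianReal 0 1))
    (hfg : ∀ x, f (Function.curry x) = Function.curry (g x)) :
    MeasurePreserving f (gaussianMatrix ι κ) (gaussianMatrix ι κ) := by
  have he := measurePreserving_curry_gaussianMatrix (ι := ι) (κ := κ)
  have hf : f = MeasurableEquiv.curry ι κ ℝ ∘ g ∘ (MeasurableEquiv.curry ι κ ℝ).symm := by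
    funext M
    exact hfg (Function.uncurry M)
  rw [hf]
  exact he.comp (hg.comp he.symm)

lemma measurePreserving_diagonal_mul_gaussianMatrix [DecidableEq ι] {d : ι → ℝ}
    (hd : ∀ i, d i ^ 2 = 1) :
    MeasurePreserving (diagonal d * ·) (gaussianMatrix ι κ) (gaussianMatrix ι κ) := by
  refine measurePreserving_gaussianMatrix_of_pi
    (measurePreserving_pi _ _ fun p => ⟨measurable_const_mul (d p.1), ?_⟩) fun x => ?_
  · rw [gaussianReal_map_const_mul, mul_zero]
    congr
    exact NNReal.eq (by simp [hd])
  · ext i j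
    exact diagonal_mul _ _ _ _

lemma measurePreserving_submatrix_gaussianMatrix (e : ι ≃ ι) :
    MeasurePreserving (·.submatrix e id) (gaussianMatrix ι κ) (gaussianMatrix ι κ) := by
  let σ : ι × κ ≃ ι × κ := e.prodCongr (Equiv.refl κ)
  have hσ := measurePreserving_piCongrLeft (fun _ : ι × κ => gaussianReal 0 1) σ.symm
  refine measurePreserving_gaussianMatrix_of_pi hσ fun x => ?_
  ext i j
  have h := MeasurableEquiv.piCongrLeft_apply_apply (β := fun _ => ℝ) σ.symm x (σ (i, j))
  rw [Equiv.symm_apply_apply] at h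
  exact h.symm

end GaussianMatrix

section ColProjGaussian
variable {ι κ : Type*} [Fintype ι] [Fintype κ] [DecidableEq κ]

lemma integral_colProj_apply_comp {f : Matrix ι κ ℝ → Matrix ι κ ℝ}
    (hf : MeasurePreserving f (gaussianMatrix ι κ) (gaussianMatrix ι κ)) (i j : ι) :
    ∫ M, colProj (f M) i j ∂gaussianMatrix ι κ = ∫ M, colProj M i j ∂gaussianMatrix ι κ := by
  conv_rhs => rw [← hf.map_eq]
  exact (integral_map hf.aemeasurable (measurable_colProj_apply i j).aestronglyMeasurable).symm

lemma integral_colProj_apply_of_ne [DecidableEq ι] {i j : ι} (hij : i ≠ j) :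
    ∫ M, colProj M i j ∂gaussianMatrix ι κ = 0 := by
  set d : ι → ℝ := fun a => if a = i then -1 else 1
  have hd : ∀ a, d a ^ 2 = 1 := fun a => by by_cases h : a = i <;> simp [d, h]
  have hflip : ∀ M : Matrix ι κ ℝ, colProj (diagonal d * M) i j = -colProj M i j := by
    intro M
    have hU : (diagonal d)ᵀ * diagonal d = 1 := by
      rw [diagonal_transpose, diagonal_mul_diagonal, ← diagonal_one]
      exact congrArg diagonal (funext fun a => (sq (d a)).symm.trans (hd a))
    rw [colProj_orthogonal_mul hU, diagonal_transpose, mul_diagonal, diagonal_mul]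
    simp [d, hij.symm]
  have h := integral_colProj_apply_comp
    (measurePreserving_diagonal_mul_gaussianMatrix (κ := κ) hd) i j
  simp only [hflip, integral_neg] at h
  linarith

lemma integral_colProj_apply_self_eq [DecidableEq ι] (i j : ι) :
    ∫ M, colProj M i i ∂gaussianMatrix ι κ = ∫ M, colProj M j j ∂gaussianMatrix ι κ := by
  have h := integral_colProj_apply_comp
    (measurePreserving_submatrix_gaussianMatrix (κ := κ) (Equiv.swap i j)) i i
  simpa only [colProj_submatrix, submatrix_apply, Equiv.swap_apply_left] using h.symm

end ColProjGaussian

lemma hasLaw_gaussianMatrix {ι κ Ω : Type*} [Fintype ι] [Fintype κ] [MeasurableSpace Ω]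
    {μ : Measure Ω} {S : Ω → Matrix ι κ ℝ}
    (hGauss : ∀ i j, μ.map (fun ω => S ω i j) = gaussianReal 0 1)
    (hIndep : iIndepFun (fun (p : ι × κ) ω => S ω p.1 p.2) μ) :
    HasLaw S (gaussianMatrix ι κ) μ := by
  have hentry : ∀ p : ι × κ, HasLaw (fun ω => S ω p.1 p.2) (gaussianReal 0 1) μ := fun p =>
    { aemeasurable := aemeasurable_of_map_neZero (by rw [hGauss]; infer_instance)
      map_eq := hGauss p.1 p.2 }
  exact measurePreserving_curry_gaussianMatrix.comp_hasLaw (hIndep.hasLaw_pi hentry)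

section ColProjLaw
variable {ι κ Ω : Type*} [Fintype ι] [Fintype κ] [DecidableEq κ] [MeasurableSpace Ω]
  {μ : Measure Ω} {S : Ω → Matrix ι κ ℝ}

lemma integrable_colProj_apply [IsFiniteMeasure μ] (hS : AEMeasurable S μ) (i j : ι) :
    Integrable (fun ω => colProj (S ω) i j) μ :=
  .of_bound ((measurable_colProj_apply i j).comp_aemeasurable hS).aestronglyMeasurable 1
    (ae_of_all _ fun ω => abs_colProj_apply_le_one (S ω) i j)

lemma integral_colProj_eq_smul_one [DecidableEq ι] [IsProbabilityMeasure μ]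
    (hS : HasLaw S (gaussianMatrix ι κ) μ) {t : ℝ} (htr : ∀ᵐ ω ∂μ, trace (colProj (S ω)) = t) :
    (of fun i j => ∫ ω, colProj (S ω) i j ∂μ) = (t / Fintype.card ι) • 1 := by
  have hlaw : ∀ i j, ∫ ω, colProj (S ω) i j ∂μ = ∫ M, colProj M i j ∂gaussianMatrix ι κ :=
    fun i j => hS.integral_comp (measurable_colProj_apply i j).aestronglyMeasurable
  have htrace : ∑ i, ∫ ω, colProj (S ω) i i ∂μ = t := by
    rw [← integral_finsetSum (f := fun i ω => colProj (S ω) i i) _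
      fun i _ => integrable_colProj_apply hS.aemeasurable i i]
    change ∫ ω, trace (colProj (S ω)) ∂μ = t
    simp [integral_congr_ae htr]
  ext i j
  by_cases hij : i = j
  · subst hij
    simp only [hlaw, integral_colProj_apply_self_eq _ i, Finset.sum_const, Finset.card_univ,
      nsmul_eq_mul] at htrace
    have hcard : (Fintype.card ι : ℝ) ≠ 0 := Nat.cast_ne_zero.2 (Fintype.card_pos_iff.2 ⟨i⟩).ne'
    simp [hlaw, ← htrace, hcard]
  · simp [hlaw, integral_colProj_apply_of_ne hij, hij]

end ColProjLaw

lemma integrable_trace_mul {n Ω : Type*} [Fintype n] [MeasurableSpace Ω] {μ : Measure Ω}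
    (A : Matrix n n ℝ) {P : Ω → Matrix n n ℝ} (hP : ∀ i j, Integrable (fun ω => P ω i j) μ) :
    Integrable (fun ω => trace (A * P ω)) μ :=
  integrable_finsetSum _ fun i _ => integrable_finsetSum _ fun j _ => (hP j i).const_mul _

lemma integral_trace_mul {n Ω : Type*} [Fintype n] [MeasurableSpace Ω] {μ : Measure Ω}
    (A : Matrix n n ℝ) {P : Ω → Matrix n n ℝ} (hP : ∀ i j, Integrable (fun ω => P ω i j) μ) :
    ∫ ω, trace (A * P ω) ∂μ = trace (A * of fun i j => ∫ ω, P ω i j ∂μ) := by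
  have hexpand : ∀ ω, trace (A * P ω) = ∑ i, ∑ j, A i j * P ω j i := fun ω => rfl
  simp only [hexpand]
  rw [integral_finsetSum (f := fun i ω => ∑ j, A i j * P ω j i) _
    fun i _ => integrable_finsetSum _ fun j _ => (hP j i).const_mul _]
  refine Finset.sum_congr rfl fun i _ => ?_
  rw [integral_finsetSum (f := fun j ω => A i j * P ω j i) _ fun j _ => (hP j i).const_mul _]
  simp only [integral_const_mul]
  rfl

theorem rac_variance_general {m n r₂ : ℕ} (hr₂ : r₂ ≤ n) (hr₂pos : 0 < r₂)
    {Ω : Type*} [MeasurableSpace Ω] (μ : Measure Ω) [IsProbabilityMeasure μ]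
    (X : Matrix (Fin m) (Fin n) ℝ)
    (S : Ω → Matrix (Fin n) (Fin r₂) ℝ)
    (hGauss : ∀ i j, Measure.map (fun ω => S ω i j) μ = gaussianReal 0 1)
    (hIndep : iIndepFun
      (fun (p : Fin n × Fin r₂) ω => S ω p.1 p.2) μ)
    (Q₂ : Ω → Matrix (Fin n) (Fin r₂) ℝ) (R : Ω → Matrix (Fin r₂) (Fin r₂) ℝ)
    -- `Q₂` is the orthonormal factor of the thin QR decomposition of `S`
    (hQR : ∀ ω, (Q₂ ω)ᵀ * Q₂ ω = 1 ∧
      (∀ i j : Fin r₂, j < i → R ω i j = 0) ∧ (∀ i : Fin r₂, 0 < R ω i i) ∧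
      S ω = Q₂ ω * R ω)
    (Xtil : Ω → Matrix (Fin m) (Fin n) ℝ)
    (hXtil : ∀ ω, Xtil ω = ((n : ℝ) / r₂) • (X * Q₂ ω * (Q₂ ω)ᵀ)) :
    ∫ ω, frobSq (Xtil ω - X) ∂μ ≤ ((n : ℝ) / r₂ - 1) * frobSq X := by
  have hS := hasLaw_gaussianMatrix hGauss hIndep
  have hproj : ∀ ω, Q₂ ω * (Q₂ ω)ᵀ = colProj (S ω) := fun ω => by
    obtain ⟨hQ, htri, hdiag, hSQR⟩ := hQR ω
    rw [hSQR, colProj_mul_of_isUnit_det _ (det_pos_of_upperTriangular htri hdiag).ne'.isUnit,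
      colProj_eq_mul_transpose hQ]
  have htrace : ∀ ω, trace (colProj (S ω)) = r₂ := fun ω => by
    rw [← hproj, trace_mul_comm, (hQR ω).1, trace_one, Fintype.card_fin]
  have hmean := integral_colProj_eq_smul_one hS (ae_of_all _ htrace)
  have hint := integrable_colProj_apply hS.aemeasurable
  have hn : (n : ℝ) ≠ 0 := by exact_mod_cast (hr₂pos.trans_le hr₂).ne'
  have hr : (r₂ : ℝ) ≠ 0 := by exact_mod_cast hr₂pos.ne'
  set c : ℝ := n / r₂
  refine le_of_eq ?_
  calc ∫ ω, frobSq (Xtil ω - X) ∂μ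
      = ∫ ω, (c ^ 2 - 2 * c) * trace (Xᵀ * X * colProj (S ω)) + frobSq X ∂μ := by
        refine integral_congr_ae (ae_of_all _ fun ω => ?_)
        dsimp only
        rw [hXtil, Matrix.mul_assoc, hproj,
          frobSq_smul_mul_sub_self _ _ (colProj_mul_self _) (transpose_colProj _)]
    _ = (c ^ 2 - 2 * c) * (r₂ / n) * frobSq X + frobSq X := by
        rw [integral_add ((integrable_trace_mul _ hint).const_mul _) (integrable_const _),
          integral_const_mul, integral_trace_mul _ hint,
          hmean, Matrix.mul_smul, Matrix.mul_one, trace_smul, trace_mul_comm, ← frobSq_eq_trace]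
        simp [mul_comm, mul_assoc]
    _ = (c - 1) * frobSq X := by
        simp only [c]
        field_simp
        ring

/-- Variance bound of RAC: if `Q₂` is uniformly sampled from the Stiefel manifold via
QR of a Gaussian matrix and `X̃ = (n/r₂)·XQ₂Q₂ᵀ`, then
`E[‖X̃ − X‖_F²] ≤ (n/r₂ − 1)·‖X‖_F²`. -/
theorem rac_variance {m n r₂ : ℕ} (hr₂ : r₂ ≤ n) (hr₂pos : 0 < r₂)
    {Ω : Type*} [MeasurableSpace Ω] (μ : Measure Ω) [IsProbabilityMeasure μ]
    (X : Matrix (Fin m) (Fin n) ℝ)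
    (S : Ω → Matrix (Fin n) (Fin r₂) ℝ)
    (hGauss : ∀ i j, Measure.map (fun ω => S ω i j) μ = gaussianReal 0 1)
    (hIndep : iIndepFun
      (fun (p : Fin n × Fin r₂) ω => S ω p.1 p.2) μ)
    (Q₂ : Ω → Matrix (Fin n) (Fin r₂) ℝ) (R : Ω → Matrix (Fin r₂) (Fin r₂) ℝ)
    (hQ₂meas : Measurable Q₂)
    -- `Q₂` is the orthonormal factor of the thin QR decomposition of `S`
    (hQR : ∀ ω, (Q₂ ω)ᵀ * Q₂ ω = 1 ∧
      (∀ i j : Fin r₂, j < i → R ω i j = 0) ∧ (∀ i : Fin r₂, 0 < R ω i i) ∧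
      S ω = Q₂ ω * R ω)
    (Xtil : Ω → Matrix (Fin m) (Fin n) ℝ)
    (hXtil : ∀ ω, Xtil ω = ((n : ℝ) / r₂) • (X * Q₂ ω * (Q₂ ω)ᵀ)) :
    ∫ ω, frobSq (Xtil ω - X) ∂μ ≤ ((n : ℝ) / r₂ - 1) * frobSq X :=
  rac_variance_general hr₂ hr₂pos μ X S hGauss hIndep Q₂ R hQR Xtil hXtil
end

section
/- Let Q₁ ∈ ℝ^{n×r₁} have orthonormal columns and let U ∈ ℝ^{n×(n−r₁)} be an orthonormal basis of the orthogonal complement of the column space of Q₁, so that Q₁Q₁ᵀ + UUᵀ = I_n. If Q₂ = UV where V ∈ ℝ^{(n−r₁)×r₂} is a random matrix with VᵀV = I_{r₂} and E[VVᵀ] = (r₂/(n−r₁))I_{n−r₁}, and k = (n−r₁)/r₂, then E[(UUᵀ − kQ₂Q₂ᵀ)²] = (k−1)·UUᵀ. -/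
/-!
Both `UUᵀ` and `P = Q₂Q₂ᵀ = U(VVᵀ)Uᵀ` are orthogonal projections, and the range of `P` lies in
that of `UUᵀ`. Hence `(UUᵀ − kP)² = UUᵀ + (k² − 2k)P`, and since `E[P] = U E[VVᵀ] Uᵀ = UUᵀ/k`
the expectation is `(1 + k − 2)UUᵀ`.
-/

open Matrix MeasureTheory

theorem IsIdempotentElem.sub_smul_mul_self {𝕜 R : Type*} [CommRing 𝕜] [Ring R] [Algebra 𝕜 R]
    {A P : R} (hA : IsIdempotentElem A) (hP : IsIdempotentElem P) (hAP : A * P = P)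
    (hPA : P * A = P) (k : 𝕜) :
    (A - k • P) * (A - k • P) = A + (k ^ 2 - 2 * k) • P := by
  simp only [sub_mul, mul_sub, smul_mul_assoc, mul_smul_comm, hA.eq, hP.eq, hAP, hPA]
  module

namespace Matrix

theorem mul_mul_apply_eq_sum {l m n p α : Type*} [Fintype m] [Fintype n]
    [NonUnitalNonAssocSemiring α] (A : Matrix l m α) (M : Matrix m n α) (B : Matrix n p α)
    (i : l) (j : p) : (A * M * B) i j = ∑ a, ∑ b, A i a * M a b * B b j := by
  simp only [mul_apply, Finset.sum_mul]
  exact Finset.sum_comm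

section Isometry

variable {m n p R : Type*} [Fintype m] [Fintype n] [DecidableEq n] [CommRing R]

theorem conj_mul_conj_of_transpose_mul_eq_one {U : Matrix m n R} (hU : Uᵀ * U = 1)
    (M N : Matrix n n R) : U * M * Uᵀ * (U * N * Uᵀ) = U * (M * N) * Uᵀ := by
  simp only [Matrix.mul_assoc]
  rw [← Matrix.mul_assoc Uᵀ U, hU, Matrix.one_mul]

theorem isIdempotentElem_mul_transpose [DecidableEq m] {U : Matrix m n R} (hU : Uᵀ * U = 1) :
    IsIdempotentElem (U * Uᵀ) := by
  simpa [IsIdempotentElem] using conj_mul_conj_of_transpose_mul_eq_one hU 1 1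

theorem sub_smul_mul_transpose_mul_self [Fintype p] [DecidableEq m] [DecidableEq p]
    {U : Matrix m n R} (hU : Uᵀ * U = 1) {V : Matrix n p R} (hV : Vᵀ * V = 1) (k : R) :
    (U * Uᵀ - k • (U * V * (U * V)ᵀ)) * (U * Uᵀ - k • (U * V * (U * V)ᵀ)) =
      U * Uᵀ + (k ^ 2 - 2 * k) • (U * (V * Vᵀ) * Uᵀ) := by
  have hP : U * V * (U * V)ᵀ = U * (V * Vᵀ) * Uᵀ := by
    simp only [transpose_mul, Matrix.mul_assoc]
  rw [hP]
  apply (isIdempotentElem_mul_transpose hU).sub_smul_mul_self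
  · simpa [IsIdempotentElem, (isIdempotentElem_mul_transpose hV).eq] using
      conj_mul_conj_of_transpose_mul_eq_one hU (V * Vᵀ) (V * Vᵀ)
  · simpa using conj_mul_conj_of_transpose_mul_eq_one hU 1 (V * Vᵀ)
  · simpa using conj_mul_conj_of_transpose_mul_eq_one hU (V * Vᵀ) 1

end Isometry

end Matrix

section Integral

variable {Ω : Type*} [MeasurableSpace Ω] {μ : Measure Ω} {l m n p : Type*} [Fintype m] [Fintype n]

theorem integrable_mul_mul_apply (A : Matrix l m ℝ) {M : Ω → Matrix m n ℝ} (B : Matrix n p ℝ)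
    (hM : ∀ a b, Integrable (fun ω => M ω a b) μ) (i : l) (j : p) :
    Integrable (fun ω => (A * M ω * B) i j) μ := by
  simp only [mul_mul_apply_eq_sum]
  exact integrable_finsetSum _ fun a _ => integrable_finsetSum _ fun b _ =>
    ((hM a b).const_mul _).mul_const _

theorem integral_mul_mul_apply (A : Matrix l m ℝ) {M : Ω → Matrix m n ℝ} (B : Matrix n p ℝ)
    (hM : ∀ a b, Integrable (fun ω => M ω a b) μ) (i : l) (j : p) :
    ∫ ω, (A * M ω * B) i j ∂μ = (A * Matrix.of (fun a b => ∫ ω, M ω a b ∂μ) * B) i j := by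
  simp only [mul_mul_apply_eq_sum]
  rw [integral_finsetSum _ fun a _ => integrable_finsetSum _ fun b _ =>
    ((hM a b).const_mul _).mul_const _]
  refine Finset.sum_congr rfl fun a _ => ?_
  rw [integral_finsetSum _ fun b _ => ((hM a b).const_mul _).mul_const _]
  refine Finset.sum_congr rfl fun b _ => ?_
  rw [integral_mul_const, integral_const_mul, of_apply]

end Integral

theorem prac_variance_key_identity_general {n r₁ r₂ : ℕ} (hr₂pos : 0 < r₂)
    {Ω : Type*} [MeasurableSpace Ω] (μ : Measure Ω) [IsProbabilityMeasure μ]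
    (U : Matrix (Fin n) (Fin (n - r₁)) ℝ) (hU : Uᵀ * U = 1)
    (V : Ω → Matrix (Fin (n - r₁)) (Fin r₂) ℝ)
    (hVV : ∀ ω, (V ω)ᵀ * V ω = 1)
    (hIntV : ∀ i j, Integrable (fun ω => (V ω * (V ω)ᵀ) i j) μ)
    (hEV : ∀ i j, ∫ ω, (V ω * (V ω)ᵀ) i j ∂μ =
      ((r₂ : ℝ) / ((n : ℝ) - r₁)) • (1 : Matrix (Fin (n - r₁)) (Fin (n - r₁)) ℝ) i j)
    (Q₂ : Ω → Matrix (Fin n) (Fin r₂) ℝ) (hQ₂ : ∀ ω, Q₂ ω = U * V ω)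
    (k : ℝ) (hk : k = ((n : ℝ) - r₁) / r₂) :
    ∀ i j, ∫ ω, ((U * Uᵀ - k • (Q₂ ω * (Q₂ ω)ᵀ)) *
        (U * Uᵀ - k • (Q₂ ω * (Q₂ ω)ᵀ))) i j ∂μ =
      (k - 1) * (U * Uᵀ) i j := by
  intro i j
  set c : ℝ := r₂ / ((n : ℝ) - r₁) with hc
  have hEP : ∫ ω, (U * (V ω * (V ω)ᵀ) * Uᵀ) i j ∂μ = c * (U * Uᵀ) i j := by
    rw [integral_mul_mul_apply U Uᵀ hIntV,
      show Matrix.of (fun a b => ∫ ω, (V ω * (V ω)ᵀ) a b ∂μ) = c • 1 from Matrix.ext hEV]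
    simp
  simp only [hQ₂, sub_smul_mul_transpose_mul_self hU (hVV _), Matrix.add_apply,
    Matrix.smul_apply, smul_eq_mul]
  rw [integral_add (integrable_const _) ((integrable_mul_mul_apply U Uᵀ hIntV i j).const_mul _),
    integral_const, probReal_univ, one_smul, integral_const_mul, hEP]
  by_cases hN : (n : ℝ) - r₁ = 0
  · -- `n = r₁`: then `k = c = 0` by division by zero, but `U` has no columns and `UUᵀ = 0`.
    have : IsEmpty (Fin (n - r₁)) := by
      rw [Nat.sub_eq_zero_of_le (by exact_mod_cast (sub_eq_zero.mp hN).le)]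
      infer_instance
    simp [mul_apply]
  · have hkc : k * c = 1 := by
      rw [hk, hc]
      field_simp [Nat.cast_ne_zero.mpr hr₂pos.ne']
    linear_combination (k - 2) * (U * Uᵀ) i j * hkc

/-- The key matrix identity in the PRAC variance computation:
if `Q₁Q₁ᵀ + UUᵀ = I`, `Q₂ = UV` with `VᵀV = I` and `E[VVᵀ] = (r₂/(n−r₁))I`, and
`k = (n−r₁)/r₂`, then `E[(UUᵀ − kQ₂Q₂ᵀ)²] = (k−1)·UUᵀ`. -/
theorem prac_variance_key_identity {n r₁ r₂ : ℕ} (hr₁ : r₁ ≤ n) (hr₂pos : 0 < r₂)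
    {Ω : Type*} [MeasurableSpace Ω] (μ : Measure Ω) [IsProbabilityMeasure μ]
    (Q₁ : Matrix (Fin n) (Fin r₁) ℝ) (hQ₁ : Q₁ᵀ * Q₁ = 1)
    (U : Matrix (Fin n) (Fin (n - r₁)) ℝ) (hU : Uᵀ * U = 1)
    (hcompl : Q₁ * Q₁ᵀ + U * Uᵀ = 1)
    (V : Ω → Matrix (Fin (n - r₁)) (Fin r₂) ℝ)
    (hVV : ∀ ω, (V ω)ᵀ * V ω = 1)
    (hIntV : ∀ i j, Integrable (fun ω => (V ω * (V ω)ᵀ) i j) μ)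
    (hEV : ∀ i j, ∫ ω, (V ω * (V ω)ᵀ) i j ∂μ =
      ((r₂ : ℝ) / ((n : ℝ) - r₁)) • (1 : Matrix (Fin (n - r₁)) (Fin (n - r₁)) ℝ) i j)
    (Q₂ : Ω → Matrix (Fin n) (Fin r₂) ℝ) (hQ₂ : ∀ ω, Q₂ ω = U * V ω)
    (k : ℝ) (hk : k = ((n : ℝ) - r₁) / r₂) :
    ∀ i j, ∫ ω, ((U * Uᵀ - k • (Q₂ ω * (Q₂ ω)ᵀ)) *
        (U * Uᵀ - k • (Q₂ ω * (Q₂ ω)ᵀ))) i j ∂μ =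
      (k - 1) * (U * Uᵀ) i j :=
  prac_variance_key_identity_general hr₂pos μ U hU V hVV hIntV hEV Q₂ hQ₂ k hk
end
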